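/- arXiv:1211.4637 — 4 statements merged into one kernel-verified Lean document; each statement's English description precedes it below -/
import Mathlib

section
/- For real α, β with α² + β² = 1, m ≥ 1, and β² ≤ 1/m, the probability that the product state (α|0⟩+β|1⟩)^{⊗m} has Hamming weight greater than k is at most (m β²)^{k+1} / (k+1)!, i.e., Σ_{j=k+1}^{m} C(m,j) α^{2(m-j)} β^{2j} ≤ (mβ²)^{k+1}/(k+1)!. -/
/-!
Writing `p = β²`, `q = α²`, the weight-`(s + i)` term is bounded by `C(m, s) p^s` times the
weight-`i` term of `(p + q)^(m - s)`, since `C(m, s + i) ≤ C(m, s) C(m - s, i)`; summing over `i`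
gives `C(m, s) p^s (p + q)^(m - s) = C(m, s) p^s`, and `C(m, s) ≤ m^s / s!`.
-/

open Finset

theorem Nat.choose_add_le_choose_mul_choose (n s i : ℕ) :
    n.choose (s + i) ≤ n.choose s * (n - s).choose i := by
  calc n.choose (s + i) ≤ n.choose (s + i) * (s + i).choose s :=
        Nat.le_mul_of_pos_right _ (Nat.choose_pos (Nat.le_add_right s i))
    _ = n.choose s * (n - s).choose i := by
        rw [Nat.choose_mul (Nat.le_add_right s i), Nat.add_sub_cancel_left]

theorem binomial_tail_le_choose_mul_pow {R : Type*} [CommSemiring R] [PartialOrder R]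
    [IsOrderedRing R] {p q : R} (hp : 0 ≤ p) (hq : 0 ≤ q) (n s : ℕ) :
    ∑ j ∈ Icc s n, (n.choose j : R) * q ^ (n - j) * p ^ j
      ≤ n.choose s * p ^ s * (p + q) ^ (n - s) := by
  rcases lt_or_ge n s with hns | hsn
  · rw [Icc_eq_empty_of_lt hns, sum_empty]
    positivity
  rw [← Ico_add_one_right_eq_Icc, sum_Ico_eq_sum_range, add_pow, mul_sum,
    show n + 1 - s = n - s + 1 by omega]
  refine sum_le_sum fun i _ => ?_
  have hchoose : (n.choose (s + i) : R) ≤ n.choose s * (n - s).choose i := by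
    simpa only [Nat.cast_mul] using Nat.mono_cast (α := R) (n.choose_add_le_choose_mul_choose s i)
  calc (n.choose (s + i) : R) * q ^ (n - (s + i)) * p ^ (s + i)
      ≤ n.choose s * (n - s).choose i * q ^ (n - s - i) * (p ^ s * p ^ i) := by
        rw [← pow_add, Nat.sub_sub]
        gcongr
    _ = n.choose s * p ^ s * (p ^ i * q ^ (n - s - i) * (n - s).choose i) := by ring

theorem high_weight_prob_le_general (m k : ℕ) (α β : ℝ)
    (hαβ : α ^ 2 + β ^ 2 = 1) :
    ∑ j ∈ Finset.Icc (k + 1) m,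
        (m.choose j : ℝ) * α ^ (2 * (m - j)) * β ^ (2 * j)
      ≤ ((m : ℝ) * β ^ 2) ^ (k + 1) / (Nat.factorial (k + 1) : ℝ) := by
  calc ∑ j ∈ Icc (k + 1) m, (m.choose j : ℝ) * α ^ (2 * (m - j)) * β ^ (2 * j)
      = ∑ j ∈ Icc (k + 1) m, (m.choose j : ℝ) * (α ^ 2) ^ (m - j) * (β ^ 2) ^ j := by
        simp only [pow_mul]
    _ ≤ m.choose (k + 1) * (β ^ 2) ^ (k + 1) * (β ^ 2 + α ^ 2) ^ (m - (k + 1)) :=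
        binomial_tail_le_choose_mul_pow (sq_nonneg β) (sq_nonneg α) m (k + 1)
    _ ≤ (m : ℝ) ^ (k + 1) / (k + 1).factorial * (β ^ 2) ^ (k + 1) := by
        rw [add_comm (β ^ 2), hαβ, one_pow, mul_one]
        gcongr
        exact Nat.choose_le_pow_div (k + 1) m
    _ = ((m : ℝ) * β ^ 2) ^ (k + 1) / (k + 1).factorial := by ring

/-- For `α² + β² = 1`, `m ≥ 1` and `β² ≤ 1/m`, the probability that the product state
`(α|0⟩+β|1⟩)^{⊗m}` has Hamming weight greater than `k` is at most `(mβ²)^{k+1}/(k+1)!`: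
`Σ_{j=k+1}^m C(m,j) α^{2(m-j)} β^{2j} ≤ (mβ²)^{k+1}/(k+1)!`. -/
theorem high_weight_prob_le (m k : ℕ) (hm : 1 ≤ m) (α β : ℝ)
    (hαβ : α ^ 2 + β ^ 2 = 1) (hβ : β ^ 2 ≤ 1 / (m : ℝ)) :
    ∑ j ∈ Finset.Icc (k + 1) m,
        (m.choose j : ℝ) * α ^ (2 * (m - j)) * β ^ (2 * j)
      ≤ ((m : ℝ) * β ^ 2) ^ (k + 1) / (Nat.factorial (k + 1) : ℝ) :=
  high_weight_prob_le_general m k α β hαβ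
end

section
/- Let 0 < α < 1 and β = √(1-α²), and for r ≥ 1 let q = 2^r. Define M(γ) = (1/√(1+γ²)) [[1, -γ],[γ, 1]]. Then applying M(α^{2^{r-1}}) ⊗ ⋯ ⊗ M(α²) ⊗ M(α) to |0^r⟩ yields (β/√(1-α^{2q})) Σ_{s=0}^{q-1} α^s |s⟩, where |s⟩ denotes the computational basis state for the binary representation of s on r qubits. -/
open Finset

/-- The single-qubit rotation `M(γ) = (1/√(1+γ²)) [[1, -γ],[γ, 1]]`. -/
noncomputable def Mrot (γ : ℝ) : Matrix (Fin 2) (Fin 2) ℝ :=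
  (Real.sqrt (1 + γ ^ 2))⁻¹ • !![1, -γ; γ, 1]

/-- The tensor product operator `M(α^{2^{r-1}}) ⊗ ⋯ ⊗ M(α²) ⊗ M(α)` on `(ℂ²)^{⊗r}`,
where the `j`-th tensor factor (for `j = 0,…,r-1`, carrying the bit of weight
`2^{r-1-j}`) is acted on by `M(α^{2^{r-1-j}})`. -/
noncomputable def tensorM (r : ℕ) (α : ℝ) :
    Matrix (Fin r → Fin 2) (Fin r → Fin 2) ℝ :=
  fun x y => ∏ j : Fin r, Mrot (α ^ (2 ^ (r - 1 - (j : ℕ)))) (x j) (y j)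

/-- The value `s ∈ {0,…,2^r-1}` represented by the bit string `x`
(the `j`-th factor has weight `2^{r-1-j}`). -/
def bitsVal {r : ℕ} (x : Fin r → Fin 2) : ℕ :=
  ∑ j : Fin r, (x j : ℕ) * 2 ^ (r - 1 - (j : ℕ))

lemma Mrot_apply_zero (γ : ℝ) (i : Fin 2) :
    Mrot γ i 0 = (Real.sqrt (1 + γ ^ 2))⁻¹ * γ ^ (i : ℕ) := by
  fin_cases i <;> simp [Mrot]

lemma telescope (y : ℝ) (r : ℕ) :
    (1 - y) * ∏ k ∈ range r, (1 + y ^ 2 ^ k) = 1 - y ^ 2 ^ r := by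
  induction r with
  | zero => simp
  | succ n ih =>
    rw [Finset.prod_range_succ, ← mul_assoc, ih]
    have h : y ^ 2 ^ n * y ^ 2 ^ n = y ^ 2 ^ (n + 1) := by
      rw [← pow_add]; congr 1; rw [pow_succ]; ring
    linear_combination -h

lemma sqrt_prod {ι : Type*} (s : Finset ι) (f : ι → ℝ) (hf : ∀ i ∈ s, 0 ≤ f i) :
    ∏ i ∈ s, Real.sqrt (f i) = Real.sqrt (∏ i ∈ s, f i) := by
  induction s using Finset.cons_induction with
  | empty => simp
  | cons a s ha ih =>
    rw [Finset.prod_cons, Finset.prod_cons,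
      ih (fun i hi => hf i (Finset.mem_cons_of_mem hi)),
      ← Real.sqrt_mul (hf a (Finset.mem_cons_self a s))]

/-- Applying `M(α^{2^{r-1}}) ⊗ ⋯ ⊗ M(α²) ⊗ M(α)` to `|0^r⟩` yields
`(β/√(1-α^{2q})) Σ_{s=0}^{q-1} α^s |s⟩` with `q = 2^r`: i.e. the amplitude of the
resulting state on the basis state representing `s` is `β α^s / √(1-α^{2q})`. -/
theorem tensorM_apply_zero (r : ℕ) (hr : 1 ≤ r) (α β : ℝ)
    (hα : 0 < α) (hα1 : α < 1) (hβ : β = Real.sqrt (1 - α ^ 2)) :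
    ∀ x : Fin r → Fin 2,
      (tensorM r α).mulVec (fun y => if y = fun _ => 0 then 1 else 0) x
        = β / Real.sqrt (1 - α ^ (2 * 2 ^ r)) * α ^ bitsVal x := by
  intro x
  have hpos : (0:ℝ) < 1 - α ^ 2 := by
    have := pow_lt_one₀ (le_of_lt hα) hα1 (by norm_num : (2:ℕ) ≠ 0)
    linarith
  have hq : (0:ℝ) < 1 - α ^ (2 * 2 ^ r) := by
    have := pow_lt_one₀ (le_of_lt hα) hα1
      (by positivity : 2 * 2 ^ r ≠ 0)
    linarith
  have h1 : (tensorM r α).mulVec (fun y => if y = fun _ => 0 then 1 else 0) x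
      = tensorM r α x (fun _ => 0) := by
    simp [Matrix.mulVec, dotProduct, mul_ite]
  rw [h1]
  unfold tensorM
  simp only [Mrot_apply_zero]
  rw [Finset.prod_mul_distrib]
  have h2 : ∏ j : Fin r, (α ^ 2 ^ (r - 1 - (j : ℕ))) ^ ((x j : ℕ))
      = α ^ bitsVal x := by
    rw [bitsVal, ← Finset.prod_pow_eq_pow_sum]
    refine Finset.prod_congr rfl fun j _ => ?_
    rw [← pow_mul, mul_comm]
  have h3 : ∀ j : Fin r, 1 + (α ^ 2 ^ (r - 1 - (j : ℕ))) ^ 2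
      = 1 + (α ^ 2) ^ 2 ^ (r - 1 - (j : ℕ)) := by
    intro j
    rw [← pow_mul, ← pow_mul, mul_comm]
  have h4 : ∏ j : Fin r, (1 + (α ^ 2) ^ 2 ^ (r - 1 - (j : ℕ)))
      = (1 - α ^ (2 * 2 ^ r)) / (1 - α ^ 2) := by
    rw [Fin.prod_univ_eq_prod_range (fun j => (1 + (α ^ 2) ^ 2 ^ (r - 1 - j))) r]
    rw [Finset.prod_range_reflect (fun k => 1 + (α ^ 2) ^ 2 ^ k) r]
    have := telescope (α ^ 2) r
    rw [← pow_mul] at this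
    field_simp
    linarith [this]
  have h5 : ∏ j : Fin r, (Real.sqrt (1 + (α ^ 2 ^ (r - 1 - (j : ℕ))) ^ 2))⁻¹
      = β / Real.sqrt (1 - α ^ (2 * 2 ^ r)) := by
    rw [Finset.prod_inv_distrib,
      sqrt_prod _ _ (fun j _ => by positivity)]
    rw [Finset.prod_congr rfl (fun j _ => h3 j), h4,
      Real.sqrt_div (le_of_lt hq), hβ]
    rw [inv_div]
  rw [h2, h5]
end

section
/- With q ≥ m, α² + β² = 1, α, β > 0, the vectors B^k_q|x⟩ (for x ∈ {0,1}^m, |x| ≤ k) defined by B^k_q|x⟩ = |s_1,…,s_h⟩ ⊗ (Σ_{j=0}^{q-t-1} α^j β |j+t⟩ + α^{q-t}|q⟩) ⊗ |φ_q⟩^{⊗(k−h)} are pairwise orthonormal in (ℂ^{q+1})^{⊗(k+1)}. -/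
open Finset

/-- Hamming weight of a bit string. -/
def hamWt {m : ℕ} (x : Fin m → Bool) : ℕ :=
  (Finset.univ.filter fun i => x i = true).card

/-- The (sorted) list of positions of the ones of `x`. -/
def onesList {m : ℕ} (x : Fin m → Bool) : List ℕ :=
  ((List.finRange m).filter fun i => x i).map Fin.val

/-- `sRun x i` is the length `s_{i+1}` of the run of zeros preceding the
`(i+1)`-st one of `x` (writing `x = 0^{s_1}1 0^{s_2}1 ⋯ 0^{s_h}1 0^t`). -/
def sRun {m : ℕ} (x : Fin m → Bool) (i : ℕ) : ℕ :=
  (onesList x).getD i 0 - (if i = 0 then 0 else (onesList x).getD (i - 1) 0 + 1)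

/-- The trailing run of zeros, `t = m - s_1 - ⋯ - s_h - h`. -/
def tTrail {m : ℕ} (x : Fin m → Bool) : ℕ :=
  m - ((List.range (hamWt x)).map (sRun x)).sum - hamWt x

/-- Amplitudes of `|φ_q⟩ := Σ_{s=0}^{q-1} β α^s |s⟩ + α^q |q⟩ ∈ ℂ^{q+1}`. -/
noncomputable def phiVec (q : ℕ) (α β : ℝ) : Fin (q + 1) → ℝ :=
  fun s => if (s : ℕ) < q then β * α ^ (s : ℕ) else α ^ q

/-- Amplitudes of the middle register state
`Σ_{j=0}^{q-t-1} α^j β |j+t⟩ + α^{q-t}|q⟩ ∈ ℂ^{q+1}`. -/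
noncomputable def midVec (q t : ℕ) (α β : ℝ) : Fin (q + 1) → ℝ :=
  fun s =>
    if t ≤ (s : ℕ) ∧ (s : ℕ) < q then β * α ^ ((s : ℕ) - t)
    else if (s : ℕ) = q then α ^ (q - t) else 0

/-- The encoded vector
`B^k_q|x⟩ = |s_1,…,s_h⟩ ⊗ (Σ_{j=0}^{q-t-1} α^j β |j+t⟩ + α^{q-t}|q⟩) ⊗ |φ_q⟩^{⊗(k−h)}`
in `(ℂ^{q+1})^{⊗(k+1)}`, where `h = hamWt x`. -/
noncomputable def Bvec (q m k : ℕ) (α β : ℝ) (x : Fin m → Bool) :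
    EuclideanSpace ℝ (Fin (k + 1) → Fin (q + 1)) :=
  WithLp.toLp 2 fun s' => ∏ i : Fin (k + 1),
    (if (i : ℕ) < hamWt x then (if ((s' i : ℕ)) = sRun x (i : ℕ) then 1 else 0)
     else if (i : ℕ) = hamWt x then midVec q (tTrail x) α β (s' i)
     else phiVec q α β (s' i))

/-!
The inner product of two product states is the product of the inner products of their tensor
factors. For `x = y` every factor is a unit vector: a basis vector, or a geometric amplitude
vector whose squared norm telescopes via `β² = 1 - α²`. For `x ≠ y` with `|x| ≤ |y|`, either some
run `s_j` with `j ≤ |x|` differs, making the `j`-th factors distinct basis vectors, or all these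
runs agree; then `|x| < |y|`, and the next one of `y` lies in the trailing zero block of `x`, i.e.
`s^y_{|x|+1} < t_x`, while the middle factor of `x` is supported on `[t_x, q]`.
-/

open Finset ComplexConjugate

theorem inner_toLp_prod {𝕜 ι κ : Type*} [RCLike 𝕜] [Fintype ι] [DecidableEq ι] [Fintype κ]
    (f g : ι → κ → 𝕜) :
    inner 𝕜 (WithLp.toLp 2 fun s : ι → κ => ∏ i, f i (s i) : EuclideanSpace 𝕜 (ι → κ))
        (WithLp.toLp 2 fun s => ∏ i, g i (s i)) = ∏ i, ∑ a, conj (f i a) * g i a := by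
  simp only [PiLp.inner_apply, RCLike.inner_apply, map_prod, Fintype.prod_sum,
    ← Finset.prod_mul_distrib]
  simp_rw [mul_comm]

theorem sum_mul_ite_val_eq {R : Type*} [NonAssocSemiring R] {n b : ℕ} (f : Fin n → R)
    (hb : b < n) : ∑ s : Fin n, f s * (if (s : ℕ) = b then 1 else 0) = f ⟨b, hb⟩ := by
  rw [Finset.sum_eq_single ⟨b, hb⟩] <;> simp_all [Fin.ext_iff]

section Runs

variable {m : ℕ} (x : Fin m → Bool)

theorem length_onesList : (onesList x).length = hamWt x := by
  simp [onesList, hamWt, Fin.univ_def, Finset.filter, Finset.card, Multiset.filter_coe]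

theorem onesList_pairwise_lt : (onesList x).Pairwise (· < ·) :=
  (List.pairwise_lt_finRange m).filter _ |>.map _ fun _ _ h => h

theorem mem_onesList (i : Fin m) : (i : ℕ) ∈ onesList x ↔ x i = true := by
  simp [onesList, Fin.val_eq_val]

theorem getD_onesList_lt {j : ℕ} (hj : j < hamWt x) : (onesList x).getD j 0 < m := by
  have hj' : j < (onesList x).length := (length_onesList x).symm ▸ hj
  rw [List.getD_eq_getElem _ _ hj']
  obtain ⟨i, -, hi⟩ := List.mem_map.mp (List.getElem_mem hj')
  exact hi ▸ i.isLt

theorem getD_onesList_eq_sum {j : ℕ} (hj : j < hamWt x) :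
    (onesList x).getD j 0 = ∑ r ∈ range (j + 1), sRun x r + j := by
  induction j with
  | zero => simp [sRun]
  | succ j ih =>
    have h2 : j + 1 < (onesList x).length := (length_onesList x).symm ▸ hj
    have hlt : (onesList x).getD j 0 < (onesList x).getD (j + 1) 0 := by
      rw [List.getD_eq_getElem _ _ (Nat.lt_of_succ_lt h2), List.getD_eq_getElem _ _ h2]
      exact List.pairwise_iff_getElem.mp (onesList_pairwise_lt x) j (j + 1) _ h2 j.lt_succ_self
    have hrun : sRun x (j + 1) = (onesList x).getD (j + 1) 0 - ((onesList x).getD j 0 + 1) := by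
      simp [sRun]
    rw [sum_range_succ]
    have := ih (Nat.lt_of_succ_lt hj)
    omega

theorem sRun_lt {j : ℕ} (hj : j < hamWt x) : sRun x j < m :=
  (Nat.sub_le _ _).trans_lt (getD_onesList_lt x hj)

variable {x} {y : Fin m → Bool}

theorem eq_of_sRun_eq (hh : hamWt x = hamWt y) (hr : ∀ j < hamWt x, sRun x j = sRun y j) :
    x = y := by
  have hlist : onesList x = onesList y := by
    refine List.ext_getElem (by rw [length_onesList, length_onesList, hh]) fun j h1 h2 => ?_
    have hj : j < hamWt x := length_onesList x ▸ h1
    have hx := getD_onesList_eq_sum x hj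
    have hy := getD_onesList_eq_sum y (hh ▸ hj)
    rw [List.getD_eq_getElem _ _ h1] at hx
    rw [List.getD_eq_getElem _ _ h2] at hy
    rw [hx, hy, sum_congr rfl fun r hr' => hr r (by have := mem_range.mp hr'; omega)]
  funext i
  have hmem := mem_onesList x i
  rw [hlist, mem_onesList] at hmem
  exact Bool.eq_iff_iff.mpr hmem.symm

theorem sRun_lt_tTrail (hr : ∀ j < hamWt x, sRun x j = sRun y j) (hlt : hamWt x < hamWt y) :
    sRun y (hamWt x) < tTrail x := by
  have hpos := getD_onesList_eq_sum y hlt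
  have hbound := getD_onesList_lt y hlt
  have hsum : ∑ r ∈ range (hamWt x), sRun y r = ∑ r ∈ range (hamWt x), sRun x r :=
    sum_congr rfl fun r hr' => (hr r (mem_range.mp hr')).symm
  have ht : tTrail x = m - ∑ r ∈ range (hamWt x), sRun x r - hamWt x := rfl
  rw [sum_range_succ, hsum] at hpos
  omega

end Runs

section Amplitudes

variable {α β : ℝ}

theorem sum_mul_geom_eq (hαβ : α ^ 2 + β ^ 2 = 1) (n : ℕ) :
    ∑ j ∈ range n, β ^ 2 * (α ^ 2) ^ j = 1 - (α ^ 2) ^ n := by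
  rw [← mul_sum, show β ^ 2 = 1 - α ^ 2 by linarith, mul_neg_geom_sum]

theorem phiVec_eq_midVec_zero (q : ℕ) : phiVec q α β = midVec q 0 α β := by
  funext s
  have := s.is_le
  simp only [phiVec, midVec, Nat.zero_le, true_and, Nat.sub_zero]
  split_ifs <;> first | rfl | omega

theorem midVec_of_lt {q t : ℕ} {s : Fin (q + 1)} (hs : (s : ℕ) < t) (hsq : (s : ℕ) < q) :
    midVec q t α β s = 0 := by
  simp [midVec, hs.not_ge, hsq.ne]

theorem sum_midVec_mul_self (hαβ : α ^ 2 + β ^ 2 = 1) (q t : ℕ) :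
    ∑ s, midVec q t α β s * midVec q t α β s = 1 := by
  have hlast : midVec q t α β (Fin.last q) = α ^ (q - t) := by simp [midVec]
  have hinit (s : Fin q) : midVec q t α β s.castSucc * midVec q t α β s.castSucc
      = if t ≤ (s : ℕ) then β ^ 2 * (α ^ 2) ^ ((s : ℕ) - t) else 0 := by
    simp only [midVec, Fin.val_castSucc, s.isLt, and_true, s.isLt.ne, if_false]
    split_ifs <;> ring
  have hIco : (range q).filter (t ≤ ·) = Ico t q := by
    ext j; simp [and_comm]
  rw [Fin.sum_univ_castSucc, sum_congr rfl fun s _ => hinit s, hlast,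
    Fin.sum_univ_eq_sum_range (fun j => if t ≤ j then β ^ 2 * (α ^ 2) ^ (j - t) else 0),
    ← sum_filter, hIco, sum_Ico_eq_sum_range]
  simp only [Nat.add_sub_cancel_left, sum_mul_geom_eq hαβ]
  ring

end Amplitudes

noncomputable def Bfactor (q m k : ℕ) (α β : ℝ) (x : Fin m → Bool) (i : Fin (k + 1)) :
    Fin (q + 1) → ℝ := fun s =>
  if (i : ℕ) < hamWt x then (if (s : ℕ) = sRun x i then 1 else 0)
  else if (i : ℕ) = hamWt x then midVec q (tTrail x) α β s
  else phiVec q α β s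

section Bvec

variable {q m k : ℕ} {α β : ℝ}

theorem inner_Bvec (x y : Fin m → Bool) :
    inner ℝ (Bvec q m k α β x) (Bvec q m k α β y)
      = ∏ i, ∑ s, Bfactor q m k α β x i s * Bfactor q m k α β y i s :=
  (inner_toLp_prod (Bfactor q m k α β x) (Bfactor q m k α β y)).trans (by
    simp only [conj_trivial])

theorem inner_Bvec_self (hq : m ≤ q) (hαβ : α ^ 2 + β ^ 2 = 1) (x : Fin m → Bool) :
    inner ℝ (Bvec q m k α β x) (Bvec q m k α β x) = 1 := by
  rw [inner_Bvec]
  refine prod_eq_one fun i _ => ?_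
  rcases lt_trichotomy (i : ℕ) (hamWt x) with h | h | h
  · simp only [Bfactor, if_pos h]
    rw [sum_mul_ite_val_eq _ ((sRun_lt x h).trans_le hq |>.trans q.lt_succ_self)]
    simp
  · simp only [Bfactor, h, lt_irrefl, if_false, if_true]
    exact sum_midVec_mul_self hαβ q _
  · simp only [Bfactor, h.not_gt, h.ne', if_false, phiVec_eq_midVec_zero]
    exact sum_midVec_mul_self hαβ q 0

theorem inner_Bvec_eq_zero (hq : m ≤ q) {x y : Fin m → Bool} (hne : x ≠ y) (hx : hamWt x ≤ k)
    (hxy : hamWt x ≤ hamWt y) : inner ℝ (Bvec q m k α β x) (Bvec q m k α β y) = 0 := by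
  rw [inner_Bvec]
  by_cases hrun : ∃ j < hamWt x, sRun x j ≠ sRun y j
  · obtain ⟨j, hj, hsj⟩ := hrun
    refine prod_eq_zero (mem_univ ⟨j, by omega⟩) ?_
    simp only [Bfactor, if_pos hj, if_pos (hj.trans_le hxy)]
    rw [sum_mul_ite_val_eq _ ((sRun_lt y (hj.trans_le hxy)).trans_le hq |>.trans q.lt_succ_self)]
    simp [hsj.symm]
  · push Not at hrun
    have hlt : hamWt x < hamWt y := hxy.lt_of_ne fun h => hne (eq_of_sRun_eq h hrun)
    have hb : sRun y (hamWt x) < q := (sRun_lt y hlt).trans_le hq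
    refine prod_eq_zero (mem_univ ⟨hamWt x, by omega⟩) ?_
    simp only [Bfactor, lt_irrefl, if_false, if_true, if_pos hlt]
    rw [sum_mul_ite_val_eq _ (hb.trans q.lt_succ_self)]
    exact midVec_of_lt (sRun_lt_tTrail hrun hlt) hb

end Bvec

theorem Bvec_orthonormal_general (q m k : ℕ) (hq : m ≤ q) (α β : ℝ)
    (hαβ : α ^ 2 + β ^ 2 = 1) :
    ∀ x y : Fin m → Bool, hamWt x ≤ k → hamWt y ≤ k →
      (inner ℝ (Bvec q m k α β x) (Bvec q m k α β y) : ℝ)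
        = if x = y then 1 else 0 := by
  intro x y hx hy
  rcases eq_or_ne x y with rfl | hne
  · rw [if_pos rfl, inner_Bvec_self hq hαβ]
  rw [if_neg hne]
  rcases le_total (hamWt x) (hamWt y) with hxy | hyx
  · exact inner_Bvec_eq_zero hq hne hx hxy
  · rw [real_inner_comm]
    exact inner_Bvec_eq_zero hq hne.symm hy hyx

/-- For `q ≥ m` and `α, β > 0` with `α² + β² = 1`, the vectors `B^k_q|x⟩`
for `x ∈ {0,1}^m` of Hamming weight `≤ k` are pairwise orthonormal. -/
theorem Bvec_orthonormal (q m k : ℕ) (hq : m ≤ q) (α β : ℝ)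
    (hα : 0 < α) (hβ : 0 < β) (hαβ : α ^ 2 + β ^ 2 = 1) :
    ∀ x y : Fin m → Bool, hamWt x ≤ k → hamWt y ≤ k →
      (inner ℝ (Bvec q m k α β x) (Bvec q m k α β y) : ℝ)
        = if x = y then 1 else 0 :=
  Bvec_orthonormal_general q m k hq α β hαβ
end

section
/- Let |ψ⟩ be a unit vector in (ℂ²)^{⊗m}. Perform the two-outcome projective measurement {P_0 = |0^m⟩⟨0^m|, P_1 = I − P_0}; if the outcome is 1, recursively apply the same scheme to the first m/2 qubits and then to the last m/2 qubits (with m a power of 2, recursing until single qubits are measured). Then for every x ∈ {0,1}^m, the probability that this recursive procedure outputs x equals |⟨x|ψ⟩|², the probability of outcome x under a full computational-basis measurement. -/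
open Finset

/-- The all-zeros string. -/
def zeroStr (n : ℕ) : Fin n → Bool := fun _ => false

/-- Concatenation of two half bit-strings into a full bit-string. -/
def combineBits (r : ℕ) (x1 x2 : Fin (2 ^ r) → Bool) : Fin (2 ^ (r + 1)) → Bool :=
  fun i =>
    if h : (i : ℕ) < 2 ^ r then x1 ⟨i, h⟩
    else x2 ⟨(i : ℕ) - 2 ^ r, by
      have := i.isLt
      have h2 : 2 ^ (r + 1) = 2 ^ r + 2 ^ r := by ring
      omega⟩

/-- `branches r E ψ x` is the list of (unnormalized) collapsed environment states,
one for each measurement record of the recursive measurement scheme that outputs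
the bit string `x`, applied to the subsystem of `2^r` qubits of the joint
(unnormalized) state `ψ` (with environment `E`).  The scheme: first measure the
projector onto `|0^{2^r}⟩` vs. its complement; on outcome `0` halt with output
`0^{2^r}`; on outcome `1` recurse on the first half of the qubits (with the second
half joined to the environment) and then on the second half; single qubits are
measured in the computational basis directly. -/
def branches : (r : ℕ) → (E : Type) → ((Fin (2 ^ r) → Bool) → E → ℂ) →
    (Fin (2 ^ r) → Bool) → List (E → ℂ)
  | 0, _, ψ, x => [ψ x]
  | (r + 1), E, ψ, x =>
    let a : E → ℂ := ψ (zeroStr _)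
    let ψ₁ : (Fin (2 ^ (r + 1)) → Bool) → E → ℂ :=
      fun y e => ψ y e - (if y = zeroStr _ then a e else 0)
    let φ : (Fin (2 ^ r) → Bool) → ((Fin (2 ^ r) → Bool) × E) → ℂ :=
      fun x1 p => ψ₁ (combineBits r x1 p.1) p.2
    let x1 : Fin (2 ^ r) → Bool := fun i => x ⟨i, by
      have := i.isLt
      have h2 : 2 ^ (r + 1) = 2 ^ r + 2 ^ r := by ring
      omega⟩
    let x2 : Fin (2 ^ r) → Bool := fun i => x ⟨(i : ℕ) + 2 ^ r, by
      have := i.isLt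
      have h2 : 2 ^ (r + 1) = 2 ^ r + 2 ^ r := by ring
      omega⟩
    let rest : List (E → ℂ) :=
      (branches r ((Fin (2 ^ r) → Bool) × E) φ x1).flatMap
        (fun χ => branches r E (fun x2' e => χ (x2', e)) x2)
    if x = zeroStr _ then a :: rest else rest

/-! Generalise from `Unit` to an arbitrary environment `E` and prove, pointwise in the
environment, that the squared norms of the branches outputting `x` add up to `‖ψ x e‖ ^ 2`.
The first measurement splits `ψ` into `P₀ψ`, which carries all of the amplitude at `0^m` and
none elsewhere, and `(1 - P₀)ψ`, which carries the rest. On outcome `1` the first half is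
measured with the second half absorbed into the environment, and then the second half
alone; the induction hypothesis, applied once for each half, gives back
`‖((1 - P₀)ψ) x e‖ ^ 2`. -/

theorem List.sum_map_flatMap {α β M : Type*} [AddMonoid M] (l : List α) (f : α → List β)
    (g : β → M) : ((l.flatMap f).map g).sum = (l.map fun a => ((f a).map g).sum).sum := by
  simp [List.flatMap, List.sum_flatten, Function.comp_def]

def firstHalf (r : ℕ) (x : Fin (2 ^ (r + 1)) → Bool) : Fin (2 ^ r) → Bool :=
  fun i => x ⟨i, by have := i.isLt; rw [pow_succ]; omega⟩

def secondHalf (r : ℕ) (x : Fin (2 ^ (r + 1)) → Bool) : Fin (2 ^ r) → Bool :=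
  fun i => x ⟨i + 2 ^ r, by have := i.isLt; rw [pow_succ]; omega⟩

theorem combineBits_firstHalf_secondHalf (r : ℕ) (x : Fin (2 ^ (r + 1)) → Bool) :
    combineBits r (firstHalf r x) (secondHalf r x) = x := by
  funext i
  unfold combineBits firstHalf secondHalf
  split_ifs with h
  · rfl
  · exact congrArg x (Fin.ext (Nat.sub_add_cancel (not_lt.mp h)))

section

variable {n : ℕ} {E : Type*}

/-- `(1 - P₀) ψ`, where `P₀` projects onto `|0^n⟩`. -/
def orthZero (ψ : (Fin n → Bool) → E → ℂ) : (Fin n → Bool) → E → ℂ :=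
  fun y e => ψ y e - if y = zeroStr n then ψ (zeroStr n) e else 0

@[simp]
theorem orthZero_zero (ψ : (Fin n → Bool) → E → ℂ) (e : E) : orthZero ψ (zeroStr n) e = 0 := by
  simp [orthZero]

theorem orthZero_of_ne (ψ : (Fin n → Bool) → E → ℂ) {y : Fin n → Bool} (hy : y ≠ zeroStr n)
    (e : E) : orthZero ψ y e = ψ y e := by
  simp [orthZero, hy]

noncomputable def branchWeight (l : List (E → ℂ)) (e : E) : ℝ := (l.map fun χ => ‖χ e‖ ^ 2).sum

@[simp]
theorem branchWeight_cons (χ : E → ℂ) (l : List (E → ℂ)) (e : E) :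
    branchWeight (χ :: l) e = ‖χ e‖ ^ 2 + branchWeight l e := by
  simp [branchWeight]

theorem branchWeight_flatMap {α : Type*} (l : List α) (f : α → List (E → ℂ)) (e : E) :
    branchWeight (l.flatMap f) e = (l.map fun a => branchWeight (f a) e).sum :=
  List.sum_map_flatMap ..

end

def branchesOfOutcomeOne (r : ℕ) (E : Type) (ψ : (Fin (2 ^ (r + 1)) → Bool) → E → ℂ)
    (x : Fin (2 ^ (r + 1)) → Bool) : List (E → ℂ) :=
  (branches r _ (fun x₁ p => orthZero ψ (combineBits r x₁ p.1) p.2) (firstHalf r x)).flatMap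
    fun χ => branches r E (fun x₂ e => χ (x₂, e)) (secondHalf r x)

theorem branches_succ (r : ℕ) (E : Type) (ψ : (Fin (2 ^ (r + 1)) → Bool) → E → ℂ)
    (x : Fin (2 ^ (r + 1)) → Bool) :
    branches (r + 1) E ψ x =
      if x = zeroStr _ then ψ (zeroStr _) :: branchesOfOutcomeOne r E ψ x
      else branchesOfOutcomeOne r E ψ x :=
  rfl

theorem branchWeight_branchesOfOutcomeOne {r : ℕ}
    (ih : ∀ (E : Type) (ψ : (Fin (2 ^ r) → Bool) → E → ℂ) (x : Fin (2 ^ r) → Bool) (e : E),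
      branchWeight (branches r E ψ x) e = ‖ψ x e‖ ^ 2)
    (E : Type) (ψ : (Fin (2 ^ (r + 1)) → Bool) → E → ℂ) (x : Fin (2 ^ (r + 1)) → Bool) (e : E) :
    branchWeight (branchesOfOutcomeOne r E ψ x) e = ‖orthZero ψ x e‖ ^ 2 := by
  rw [branchesOfOutcomeOne, branchWeight_flatMap,
    List.map_congr_left fun χ _ => ih E _ (secondHalf r x) e]
  calc branchWeight (branches r _ (fun x₁ p => orthZero ψ (combineBits r x₁ p.1) p.2)
        (firstHalf r x)) (secondHalf r x, e)
      = ‖orthZero ψ (combineBits r (firstHalf r x) (secondHalf r x)) e‖ ^ 2 := ih _ _ _ _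
    _ = ‖orthZero ψ x e‖ ^ 2 := by rw [combineBits_firstHalf_secondHalf]

theorem branchWeight_branches (r : ℕ) (E : Type) (ψ : (Fin (2 ^ r) → Bool) → E → ℂ)
    (x : Fin (2 ^ r) → Bool) (e : E) : branchWeight (branches r E ψ x) e = ‖ψ x e‖ ^ 2 := by
  induction r generalizing E with
  | zero => simp [branches, branchWeight]
  | succ r ih =>
    rw [branches_succ]
    split_ifs with hx
    · subst hx
      simp [branchWeight_branchesOfOutcomeOne ih]
    · rw [branchWeight_branchesOfOutcomeOne ih, orthZero_of_ne ψ hx]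

theorem recursive_measurement_born_general (r : ℕ)
    (ψ : (Fin (2 ^ r) → Bool) → Unit → ℂ) :
    ∀ x : Fin (2 ^ r) → Bool,
      ((branches r Unit ψ x).map fun χ => ‖χ ()‖ ^ 2).sum = ‖ψ x ()‖ ^ 2 :=
  fun x => branchWeight_branches r Unit ψ x ()

/-- Born rule for the recursive measurement: for a normalized state `ψ` on
`2^r` qubits (trivial environment), the probability that the recursive
measurement procedure outputs `x` — i.e. the sum over all measurement records
outputting `x` of the squared norms of the collapsed states — equals
`|⟨x|ψ⟩|²`, the probability of `x` under a full computational-basis measurement. -/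
theorem recursive_measurement_born (r : ℕ)
    (ψ : (Fin (2 ^ r) → Bool) → Unit → ℂ)
    (hnorm : ∑ x : Fin (2 ^ r) → Bool, ‖ψ x ()‖ ^ 2 = 1) :
    ∀ x : Fin (2 ^ r) → Bool,
      ((branches r Unit ψ x).map fun χ => ‖χ ()‖ ^ 2).sum = ‖ψ x ()‖ ^ 2 :=
  recursive_measurement_born_general r ψ
end
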